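/- Theorem (EvalUpdate, conservative version): For every environment E, expression e, and value v, if E ⊢ e ⇓ v, then (E, e) ⇐ v ⇒ (E, e); that is, pushing back the very value that a program already produces, via the conservative evaluation-update relation, succeeds and leaves both the environment and the expression unchanged. -/
import Mathlib


namespace LittleLeo

inductive Const where
  | num (n : ℚ)
  | bool (b : Bool)
deriving DecidableEq

inductive Exp where
  | const (c : Const)
  | var (x : String)
  | lam (x : String) (e : Exp)
  | app (e₁ e₂ : Exp)
  | letE (x : String) (e₁ e₂ : Exp)
  | ite (e₁ e₂ e₃ : Exp)
  | cons (e₁ e₂ : Exp)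
  | nil
deriving DecidableEq

inductive Value where
  | const (c : Const)
  | closure (env : List (String × Value)) (x : String) (e : Exp)
  | list (vs : List Value)

abbrev Env := List (String × Value)

/-- Free variables of an expression. -/
def FV : Exp → Finset String
  | .const _ => ∅
  | .var x => {x}
  | .lam x e => FV e \ {x}
  | .app e₁ e₂ => FV e₁ ∪ FV e₂
  | .letE x e₁ e₂ => FV e₁ ∪ (FV e₂ \ {x})
  | .ite e₁ e₂ e₃ => FV e₁ ∪ FV e₂ ∪ FV e₃
  | .cons e₁ e₂ => FV e₁ ∪ FV e₂
  | .nil => ∅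

/-- Value of the most recent ("last") binding of a variable. -/
def lookup : Env → String → Option Value
  | [], _ => none
  | (y, v) :: E, x => if x = y then some v else lookup E x

/-- Structural equivalence: same variables bound in the same order. -/
def StructEquiv (E E' : Env) : Prop :=
  E.map Prod.fst = E'.map Prod.fst

/-- `E` and `E'` agree on the set `S` of variables. -/
def Agrees (E E' : Env) (S : Finset String) : Prop :=
  StructEquiv E E' ∧ ∀ x ∈ S, lookup E x = lookup E' x

/-- Big-step evaluation. -/
inductive Eval : Env → Exp → Value → Prop where
  | const {E c} : Eval E (.const c) (.const c)
  | var {E x v} : lookup E x = some v → Eval E (.var x) v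
  | lam {E x e} : Eval E (.lam x e) (.closure E x e)
  | app {E e₁ e₂ Ef x ef v₂ v} :
      Eval E e₁ (.closure Ef x ef) → Eval E e₂ v₂ →
      Eval ((x, v₂) :: Ef) ef v → Eval E (.app e₁ e₂) v
  | letE {E x e₁ e₂ v₁ v₂} :
      Eval E e₁ v₁ → Eval ((x, v₁) :: E) e₂ v₂ → Eval E (.letE x e₁ e₂) v₂
  | iteTrue {E e₁ e₂ e₃ v} :
      Eval E e₁ (.const (.bool true)) → Eval E e₂ v → Eval E (.ite e₁ e₂ e₃) v
  | iteFalse {E e₁ e₂ e₃ v} :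
      Eval E e₁ (.const (.bool false)) → Eval E e₃ v → Eval E (.ite e₁ e₂ e₃) v
  | cons {E e₁ e₂ v₁ vs} :
      Eval E e₁ v₁ → Eval E e₂ (.list vs) → Eval E (.cons e₁ e₂) (.list (v₁ :: vs))
  | nil {E} : Eval E .nil (.list [])

open scoped Classical in
/-- Conservative two-way merge of one binding. -/
noncomputable def mergeBinding (e₁ e₂ : Exp) (x : String) (v₁ v₂ : Value) : Option Value :=
  if v₁ = v₂ then some v₁
  else if x ∉ FV e₂ then some v₁
  else if x ∉ FV e₁ then some v₂
  else none

/-- Conservative two-way environment merge (partial, via `Option`). -/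
noncomputable def twoWayMerge (e₁ e₂ : Exp) : Env → Env → Option Env
  | [], [] => some []
  | (x, v₁) :: E₁, (y, v₂) :: E₂ =>
      if x = y then
        match mergeBinding e₁ e₂ x v₁ v₂, twoWayMerge e₁ e₂ E₁ E₂ with
        | some v, some E => some ((x, v) :: E)
        | _, _ => none
      else none
  | _, _ => none

/-- Replace the most recent binding of `x` (U-Var). -/
def updateVar : Env → String → Value → Option Env
  | [], _, _ => none
  | (y, w) :: E, x, v =>
      if x = y then some ((y, v) :: E)
      else (updateVar E x v).map fun E' => (y, w) :: E'

/-- Conservative evaluation update relation (two-way merge). -/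
inductive Update : Env → Exp → Value → Env → Exp → Prop where
  | const {E c c'} : Update E (.const c) (.const c') E (.const c')
  | lam {E E' x e e'} :
      Update E (.lam x e) (.closure E' x e') E' (.lam x e')
  | var {E x v' E'} :
      updateVar E x v' = some E' → Update E (.var x) v' E' (.var x)
  | letE {E x e₁ e₂ v₁ v₁' v₂' E₁ E₂ e₁' e₂' E'} :
      Eval E e₁ v₁ →
      Update ((x, v₁) :: E) e₂ v₂' ((x, v₁') :: E₂) e₂' →
      Update E e₁ v₁' E₁ e₁' →
      twoWayMerge e₁ e₂ E₁ E₂ = some E' →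
      Update E (.letE x e₁ e₂) v₂' E' (.letE x e₁' e₂')
  | app {E e₁ e₂ Ef x ef v₂ v' Ef' v₂' ef' E₁ e₁' E₂ e₂' E'} :
      Eval E e₁ (.closure Ef x ef) →
      Eval E e₂ v₂ →
      Update ((x, v₂) :: Ef) ef v' ((x, v₂') :: Ef') ef' →
      Update E e₁ (.closure Ef' x ef') E₁ e₁' →
      Update E e₂ v₂' E₂ e₂' →
      twoWayMerge e₁ e₂ E₁ E₂ = some E' →
      Update E (.app e₁ e₂) v' E' (.app e₁' e₂')
  | iteTrue {E e₁ e₂ e₃ v' E₂ e₂' E'} :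
      Eval E e₁ (.const (.bool true)) →
      Update E e₂ v' E₂ e₂' →
      twoWayMerge e₁ e₂ E E₂ = some E' →
      Update E (.ite e₁ e₂ e₃) v' E' (.ite e₁ e₂' e₃)
  | iteFalse {E e₁ e₂ e₃ v' E₃ e₃' E'} :
      Eval E e₁ (.const (.bool false)) →
      Update E e₃ v' E₃ e₃' →
      twoWayMerge e₁ e₃ E E₃ = some E' →
      Update E (.ite e₁ e₂ e₃) v' E' (.ite e₁ e₂ e₃')
  | cons {E e₁ e₂ v₁' vs' E₁ e₁' E₂ e₂' E'} :
      Update E e₁ v₁' E₁ e₁' →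
      Update E e₂ (.list vs') E₂ e₂' →
      twoWayMerge e₁ e₂ E₁ E₂ = some E' →
      Update E (.cons e₁ e₂) (.list (v₁' :: vs')) E' (.cons e₁' e₂')
  | nil {E} : Update E .nil (.list []) E .nil

/-- Three-way expression merge: at differing leaves, the right-hand expression
wins if it differs from the original, otherwise the left-hand one. -/
def mergeExp : Exp → Exp → Exp → Exp
  | .lam x a, .lam _ a₁, .lam _ a₂ => .lam x (mergeExp a a₁ a₂)
  | .app a b, .app a₁ b₁, .app a₂ b₂ => .app (mergeExp a a₁ a₂) (mergeExp b b₁ b₂)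
  | .letE x a b, .letE _ a₁ b₁, .letE _ a₂ b₂ =>
      .letE x (mergeExp a a₁ a₂) (mergeExp b b₁ b₂)
  | .ite a b c, .ite a₁ b₁ c₁, .ite a₂ b₂ c₂ =>
      .ite (mergeExp a a₁ a₂) (mergeExp b b₁ b₂) (mergeExp c c₁ c₂)
  | .cons a b, .cons a₁ b₁, .cons a₂ b₂ => .cons (mergeExp a a₁ a₂) (mergeExp b b₁ b₂)
  | e, e₁, e₂ => if e₂ ≠ e then e₂ else e₁

mutual
/-- Optimistic three-way value merge. -/
def mergeVal : Value → Value → Value → Value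
  | .const c, .const c₁, .const c₂ => .const (if c₂ ≠ c then c₂ else c₁)
  | .list vs, .list vs₁, .list vs₂ => .list (mergeValList vs vs₁ vs₂)
  | .closure E x e, .closure E₁ _ e₁, .closure E₂ _ e₂ =>
      .closure (mergeEnv E E₁ E₂) x (mergeExp e e₁ e₂)
  | _, _, v₂ => v₂

def mergeValList : List Value → List Value → List Value → List Value
  | v :: vs, v₁ :: vs₁, v₂ :: vs₂ => mergeVal v v₁ v₂ :: mergeValList vs vs₁ vs₂
  | _, _, vs₂ => vs₂

/-- Optimistic three-way environment merge. -/
def mergeEnv : Env → Env → Env → Env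
  | (x, v) :: E, (_, v₁) :: E₁, (_, v₂) :: E₂ =>
      (x, mergeVal v v₁ v₂) :: mergeEnv E E₁ E₂
  | _, _, E₂ => E₂
end

/-- Optimistic evaluation update relation (three-way merge). -/
inductive UpdateOpt : Env → Exp → Value → Env → Exp → Prop where
  | const {E c c'} : UpdateOpt E (.const c) (.const c') E (.const c')
  | lam {E E' x e e'} :
      UpdateOpt E (.lam x e) (.closure E' x e') E' (.lam x e')
  | var {E x v' E'} :
      updateVar E x v' = some E' → UpdateOpt E (.var x) v' E' (.var x)
  | letE {E x e₁ e₂ v₁ v₁' v₂' E₁ E₂ e₁' e₂'} :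
      Eval E e₁ v₁ →
      UpdateOpt ((x, v₁) :: E) e₂ v₂' ((x, v₁') :: E₂) e₂' →
      UpdateOpt E e₁ v₁' E₁ e₁' →
      UpdateOpt E (.letE x e₁ e₂) v₂' (mergeEnv E E₁ E₂) (.letE x e₁' e₂')
  | app {E e₁ e₂ Ef x ef v₂ v' Ef' v₂' ef' E₁ e₁' E₂ e₂'} :
      Eval E e₁ (.closure Ef x ef) →
      Eval E e₂ v₂ →
      UpdateOpt ((x, v₂) :: Ef) ef v' ((x, v₂') :: Ef') ef' →
      UpdateOpt E e₁ (.closure Ef' x ef') E₁ e₁' →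
      UpdateOpt E e₂ v₂' E₂ e₂' →
      UpdateOpt E (.app e₁ e₂) v' (mergeEnv E E₁ E₂) (.app e₁' e₂')
  | iteTrue {E e₁ e₂ e₃ v' E₂ e₂'} :
      Eval E e₁ (.const (.bool true)) →
      UpdateOpt E e₂ v' E₂ e₂' →
      UpdateOpt E (.ite e₁ e₂ e₃) v' (mergeEnv E E E₂) (.ite e₁ e₂' e₃)
  | iteFalse {E e₁ e₂ e₃ v' E₃ e₃'} :
      Eval E e₁ (.const (.bool false)) →
      UpdateOpt E e₃ v' E₃ e₃' →
      UpdateOpt E (.ite e₁ e₂ e₃) v' (mergeEnv E E E₃) (.ite e₁ e₂ e₃')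
  | cons {E e₁ e₂ v₁' vs' E₁ e₁' E₂ e₂'} :
      UpdateOpt E e₁ v₁' E₁ e₁' →
      UpdateOpt E e₂ (.list vs') E₂ e₂' →
      UpdateOpt E (.cons e₁ e₂) (.list (v₁' :: vs')) (mergeEnv E E₁ E₂) (.cons e₁' e₂')
  | nil {E} : UpdateOpt E .nil (.list []) E .nil


theorem twoWayMerge_refl (e₁ e₂ : Exp) (E : Env) : twoWayMerge e₁ e₂ E E = some E := by
  induction E with
  | nil => rfl
  | cons p E ih =>
    obtain ⟨x, v⟩ := p
    simp [twoWayMerge, mergeBinding, ih]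

theorem updateVar_self (E : Env) (x : String) (v : Value)
    (h : lookup E x = some v) : updateVar E x v = some E := by
  induction E with
  | nil => simp [lookup] at h
  | cons p E ih =>
    obtain ⟨y, w⟩ := p
    by_cases hxy : x = y
    · simp [lookup, hxy] at h
      simp [updateVar, hxy, h]
    · simp [lookup, hxy] at h
      simp [updateVar, hxy, ih h]

/-- **EvalUpdate (conservative version).** If `E ⊢ e ⇓ v`, then pushing `v`
back via the conservative evaluation-update relation leaves the program unchanged. -/
theorem evalUpdate_conservative (E : Env) (e : Exp) (v : Value)
    (h : Eval E e v) : Update E e v E e := by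
  induction h with
  | const => exact .const
  | var h => exact .var (updateVar_self _ _ _ h)
  | lam => exact .lam
  | app h1 h2 h3 ih1 ih2 ih3 =>
    exact .app h1 h2 ih3 ih1 ih2 (twoWayMerge_refl _ _ _)
  | letE h1 h2 ih1 ih2 =>
    exact .letE h1 ih2 ih1 (twoWayMerge_refl _ _ _)
  | iteTrue h1 h2 ih1 ih2 =>
    exact .iteTrue h1 ih2 (twoWayMerge_refl _ _ _)
  | iteFalse h1 h2 ih1 ih2 =>
    exact .iteFalse h1 ih2 (twoWayMerge_refl _ _ _)
  | cons h1 h2 ih1 ih2 =>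
    exact .cons ih1 ih2 (twoWayMerge_refl _ _ _)
  | nil => exact .nil

end LittleLeo
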